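/- arXiv:2404.00475 — 5 statements merged into one kernel-verified Lean document; each statement's English description precedes it below -/
import Mathlib

section
/- Among all incentive-compatible and individually-rational transfer rules for a fixed non-decreasing allocation rule X on a finite ordered type set, the revenue-maximizing transfer is T*(θ^{jₘ}) = X(θ^{jₘ})θ^{jₘ} − Σ_{k<m} X(θ^{j_k})(θ^{j_{k+1}} − θ^{j_k}). That is, any IC and IR transfer rule T satisfies T(θ^{jₘ}) ≤ T*(θ^{jₘ}) for all m. -/
/-- For a fixed non-decreasing allocation rule `X` on a finite ordered
type set, the envelope transfer `T* m = X m θ m - Σ_{k<m} X k (θ(k+1) - θ k)`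
pointwise dominates every incentive-compatible and individually-rational transfer
rule: any IC and IR `T` satisfies `T m ≤ T* m` for all `m`. -/
theorem optimal_transfer_pointwise_max
    (θ X T : ℕ → ℝ)
    (hθ : StrictMono θ)
    (hXmono : Monotone X) (hX0 : ∀ k, 0 ≤ X k) (hX1 : ∀ k, X k ≤ 1)
    (hIC : ∀ m m', X m * θ m - T m ≥ X m' * θ m - T m')
    (hIR : ∀ m, X m * θ m - T m ≥ 0) :
    ∀ m, T m ≤ X m * θ m - ∑ k ∈ Finset.range m, X k * (θ (k + 1) - θ k) := by
  have key : ∀ m, ∑ k ∈ Finset.range m, X k * (θ (k + 1) - θ k) ≤ X m * θ m - T m := by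
    intro m
    induction m with
    | zero => simpa using hIR 0
    | succ n ih =>
      rw [Finset.sum_range_succ]
      have h := hIC (n + 1) n
      nlinarith [h, ih]
  intro m
  linarith [key m]
end

section
/- Let F be a discrete distribution with atoms 0 = θ¹ < θ² < ... < θᴹ that is sparse, i.e., for all k below the optimal reserve index ρ*, θᵏ − (θᵏ⁺¹ − θᵏ)·f(θᵏ⁺¹)/f(θᵏ) < 0. Let X : {θ^{j₁},...,θ^{j_L}} → [0,1] be non-decreasing with atoms restricted to values strictly below θ^{ρ*}, and let T be given by the optimal discrete envelope transfer T(θ^{jₘ}) = X(θ^{jₘ})θ^{jₘ} − Σ_{k<m} X(θ^{j_k})(θ^{j_{k+1}}−θ^{j_k}). Then for any γ < W̲ with γ and W̲ both below θ^{ρ*}, the expected transfer conditional on the bidder's type lying in [γ, θ̄] is strictly less than the expected transfer conditional on the type lying in [W̲, θ̄]: E_F[T(θ) | θ ∈ [γ, θ̄]] < E_F[T(θ) | θ ∈ [W̲, θ̄]] (with all types restricted to atoms of F and θ̄ the common upper bound). -/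
/-- For a sparse discrete distribution (atoms `θ`, pmf `f`, reserve
index `ρ`), a non-decreasing positive allocation rule `X`, and the optimal discrete
envelope transfer `T s m = X m θ m - Σ_{s ≤ k < m} X k (θ(k+1) - θ k)` relative to
the conditioning set of atoms indexed by `[s, c]`, the expected transfer conditional
on the type lying in `[θ a, θ c]` is strictly less than the expected transfer
conditional on the type lying in `[θ b, θ c]`, whenever `a < b ≤ ρ` (both bounds
below the reserve). -/
theorem sparse_raising_reserve_profitable
    (θ f X : ℕ → ℝ) (ρ a b c : ℕ)
    (hθ : StrictMono θ) (hθ0 : 0 ≤ θ 0)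
    (hf : ∀ k, 0 < f k)
    (hX0 : ∀ k, 0 < X k) (hX1 : ∀ k, X k ≤ 1) (hXmono : Monotone X)
    (hab : a < b) (hbρ : b ≤ ρ) (hbc : b ≤ c)
    (hsparse : ∀ k, k < ρ → θ k * f k - (θ (k + 1) - θ k) * f (k + 1) < 0)
    (T : ℕ → ℕ → ℝ)
    (hT : ∀ s m, T s m = X m * θ m - ∑ k ∈ Finset.Ico s m, X k * (θ (k + 1) - θ k)) :
    (∑ m ∈ Finset.Icc a c, f m * T a m) / (∑ m ∈ Finset.Icc a c, f m) <
      (∑ m ∈ Finset.Icc b c, f m * T b m) / (∑ m ∈ Finset.Icc b c, f m) := by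
  -- T s m ≥ X m * θ s ≥ 0 for s ≤ m
  have hθnn : ∀ k, 0 ≤ θ k := fun k => le_trans hθ0 (hθ.monotone (Nat.zero_le k))
  have hTnn : ∀ s m, s ≤ m → 0 ≤ T s m := by
    intro s m hsm
    rw [hT]
    have hsum : ∑ k ∈ Finset.Ico s m, X k * (θ (k + 1) - θ k)
        ≤ ∑ k ∈ Finset.Ico s m, X m * (θ (k + 1) - θ k) := by
      apply Finset.sum_le_sum
      intro k hk
      have hk' := (Finset.mem_Ico.mp hk).2
      exact mul_le_mul_of_nonneg_right (hXmono hk'.le)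
        (sub_nonneg.mpr (hθ.monotone (Nat.le_succ k)))
    have htel : ∑ k ∈ Finset.Ico s m, (θ (k + 1) - θ k) = θ m - θ s := by
      rw [Finset.sum_Ico_eq_sub _ hsm, Finset.sum_range_sub, Finset.sum_range_sub]
      ring
    rw [← Finset.mul_sum, htel] at hsum
    have := hθnn s
    nlinarith [hsum, hX0 m, (hX0 m).le]
  -- positivity of denominators
  have hN : ∀ s, s ≤ c → 0 < ∑ m ∈ Finset.Icc s c, f m := by
    intro s hs
    exact Finset.sum_pos (fun m _ => hf m) ⟨s, Finset.mem_Icc.mpr ⟨le_refl s, hs⟩⟩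
  have hSnn : ∀ s, 0 ≤ ∑ m ∈ Finset.Icc s c, f m * T s m := by
    intro s
    apply Finset.sum_nonneg
    intro m hm
    exact mul_nonneg (hf m).le (hTnn s m (Finset.mem_Icc.mp hm).1)
  -- one step
  have key : ∀ s, s < ρ → s + 1 ≤ c →
      (∑ m ∈ Finset.Icc s c, f m * T s m) / (∑ m ∈ Finset.Icc s c, f m) <
      (∑ m ∈ Finset.Icc (s+1) c, f m * T (s+1) m) / (∑ m ∈ Finset.Icc (s+1) c, f m) := by
    intro s hsρ hsc
    set S' := ∑ m ∈ Finset.Icc (s+1) c, f m * T (s+1) m with hS'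
    set N' := ∑ m ∈ Finset.Icc (s+1) c, f m with hN'
    have hN'pos : 0 < N' := hN _ hsc
    have hNpos : 0 < ∑ m ∈ Finset.Icc s c, f m := hN _ (le_trans (Nat.le_succ s) hsc)
    have hsplitN : ∑ m ∈ Finset.Icc s c, f m = f s + N' := by
      rw [Finset.Icc_eq_cons_Ioc (le_trans (Nat.le_succ s) hsc), Finset.sum_cons, hN',
        Finset.Icc_add_one_left_eq_Ioc]
    -- T s m = T (s+1) m - X s * (θ (s+1) - θ s) for m ≥ s+1
    have hTstep : ∀ m, s + 1 ≤ m → T s m = T (s+1) m - X s * (θ (s+1) - θ s) := by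
      intro m hm
      rw [hT, hT, Finset.sum_eq_sum_Ico_succ_bot hm]
      ring
    have hTss : T s s = X s * θ s := by rw [hT]; simp
    have hsplitS : ∑ m ∈ Finset.Icc s c, f m * T s m
        = f s * (X s * θ s) + (S' - X s * (θ (s+1) - θ s) * N') := by
      rw [Finset.Icc_eq_cons_Ioc (le_trans (Nat.le_succ s) hsc), Finset.sum_cons, hTss,
        show Finset.Ioc s c = Finset.Icc (s+1) c from (Finset.Icc_add_one_left_eq_Ioc s c).symm ▸ rfl]
      congr 1
      have : ∑ m ∈ Finset.Icc (s+1) c, f m * T s m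
          = ∑ m ∈ Finset.Icc (s+1) c, (f m * T (s+1) m - f m * (X s * (θ (s+1) - θ s))) := by
        apply Finset.sum_congr rfl
        intro m hm
        rw [hTstep m (Finset.mem_Icc.mp hm).1]
        ring
      rw [this, Finset.sum_sub_distrib, ← Finset.sum_mul]
      ring
    rw [hsplitN] at hNpos
    rw [hsplitS, hsplitN, div_lt_div_iff₀ hNpos hN'pos]
    -- Δ := f s * (X s * θ s) - X s * (θ (s+1) - θ s) * N' < 0
    have hfN : f (s+1) ≤ N' := by
      apply Finset.single_le_sum (f := f) (fun m _ => (hf m).le)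
      exact Finset.mem_Icc.mpr ⟨le_refl _, hsc⟩
    have hθd : 0 < θ (s+1) - θ s := sub_pos.mpr (hθ (Nat.lt_succ_self s))
    have hsp := hsparse s hsρ
    have hΔ : f s * (X s * θ s) - X s * (θ (s+1) - θ s) * N' < 0 := by
      have h1 : X s * (θ (s+1) - θ s) * f (s+1) ≤ X s * (θ (s+1) - θ s) * N' :=
        mul_le_mul_of_nonneg_left hfN (mul_nonneg (hX0 s).le hθd.le)
      nlinarith [hX0 s]
    have hS'nn : 0 ≤ S' := hSnn (s+1)
    nlinarith [mul_pos (hf s) hN'pos, mul_neg_of_neg_of_pos hΔ hN'pos,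
      mul_nonneg hS'nn (hf s).le]
  -- chain from a to b
  have main : ∀ b', a < b' → b' ≤ ρ → b' ≤ c →
      (∑ m ∈ Finset.Icc a c, f m * T a m) / (∑ m ∈ Finset.Icc a c, f m) <
      (∑ m ∈ Finset.Icc b' c, f m * T b' m) / (∑ m ∈ Finset.Icc b' c, f m) := by
    intro b'
    induction b' with
    | zero => omega
    | succ n ih =>
      intro h1 h2 h3
      rcases Nat.lt_or_ge a n with h | h
      · exact lt_trans (ih h (le_trans (Nat.le_succ n) h2) (le_trans (Nat.le_succ n) h3))
          (key n (by omega) h3)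
      · have : a = n := by omega
        subst this
        exact key a (by omega) h3
  exact main b hab hbρ hbc
end

section
/- In a single-action direct auction with orderly allocation and winner-paying transfers, suppose weak shill-proofness holds in the form: for every bidder i, every profile θ, and every alternative reports θ'_{j>i} of later bidders, the transfer of bidder i cannot strictly increase while her allocation stays equal (Lemma 'wsp_form'), and suppose mild ex-post incentive compatibility holds for bidder i (transfer to i, conditional on winning and on the realized signal, does not depend on her own report — Lemma 'msp_form'). Then whenever types θ_{j<i} of earlier bidders and the signal are fixed, the transfer t̃ᵢ(θ) is constant over all θᵢ and θ_{j>i} with x̃ᵢ(θ) = 1; consequently, if there exists θ₋ᵢ with x̃ᵢ(θᵢ,θ₋ᵢ) = 0 but x̃ᵢ(θᴹ,θ₋ᵢ) = 1 achieving positive utility θᵢ − t̃ᵢ* > 0, truthful reporting is not a best response: E[x̃ᵢ(θᴹ,θ₋ᵢ)θᵢ − t̃ᵢ(θᴹ,θ₋ᵢ)] > E[x̃ᵢ(θ)θᵢ − t̃ᵢ(θ)]. -/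
/-- Engine of the trilemma theorem. In a single-action direct auction
(for a fixed bidder `i`, with `Ω` the finite set of opponent continuation profiles
consistent with her signal, weighted by probabilities `μ`), suppose allocation is
`{0,1}`-valued and winner-paying, reporting the top type `θM` preserves winning,
weak shill-proofness implies the transfer does not depend on later bidders given the
allocation (`hwsp`), and mild ex-post incentive compatibility implies it does not
depend on the own report given the allocation (`hmsp`). Then the winning transfer is
a constant `t*`; and whenever there is a positive-probability opponent profile at
which truthful reporting loses but reporting `θM` wins with positive utility
`θi - t* > 0`, reporting the top type strictly beats truthful reporting in
expectation. -/
theorem single_action_trilemma_engine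
    {Ω : Type*} [Fintype Ω]
    (μ : Ω → ℝ) (hμ : ∀ ω, 0 ≤ μ ω)
    (xi ti : ℝ → Ω → ℝ)
    (hx01 : ∀ r ω, xi r ω = 0 ∨ xi r ω = 1)
    (hwp : ∀ r ω, xi r ω = 0 → ti r ω = 0)
    (θM θi : ℝ)
    (hmonoTop : ∀ r ω, xi r ω = 1 → xi θM ω = 1)
    (hwsp : ∀ r ω ω', xi r ω = xi r ω' → ti r ω = ti r ω')
    (hmsp : ∀ r r' ω, xi r ω = xi r' ω → ti r ω = ti r' ω) :
    (∀ r r' ω ω', xi r ω = 1 → xi r' ω' = 1 → ti r ω = ti r' ω') ∧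
    (∀ tstar : ℝ, (∀ r ω, xi r ω = 1 → ti r ω = tstar) → tstar < θi →
      (∃ ω, 0 < μ ω ∧ xi θi ω = 0 ∧ xi θM ω = 1) →
      ∑ ω, μ ω * (xi θM ω * θi - ti θM ω) > ∑ ω, μ ω * (xi θi ω * θi - ti θi ω)) := by
  constructor
  · intro r r' ω ω' h h'
    have hM : xi θM ω = 1 := hmonoTop r ω h
    have hM' : xi θM ω' = 1 := hmonoTop r' ω' h'
    calc ti r ω = ti θM ω := hmsp r θM ω (h.trans hM.symm)
      _ = ti θM ω' := hwsp θM ω ω' (hM.trans hM'.symm)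
      _ = ti r' ω' := hmsp θM r' ω' (hM'.trans h'.symm)
  · rintro tstar hts hlt ⟨ω₀, hμ₀, hx0, hx1⟩
    apply Finset.sum_lt_sum
    · intro ω _
      rcases hx01 θi ω with h | h
      · rw [h, hwp θi ω h]
        rcases hx01 θM ω with hM | hM
        · rw [hM, hwp θM ω hM]
        · rw [hM, hts θM ω hM]
          have := hμ ω
          nlinarith
      · have hM := hmonoTop θi ω h
        rw [h, hM, hts θi ω h, hts θM ω hM]
    · refine ⟨ω₀, Finset.mem_univ ω₀, ?_⟩
      rw [hx0, hx1, hwp θi ω₀ hx0, hts θM ω₀ hx1]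
      nlinarith
end

section
/- Consider a Dutch (descending) auction game: prices are offered in strictly decreasing order b(θᴹ) > b(θᴹ⁻¹) > ... > b(θ^{ρ}), bidders are offered each price in priority order, and the first bidder to accept wins and pays the accepted price, ending the game immediately; if a shill bidder (whose utility equals the total transfers from real bidders) accepts any price, the item goes to the shill and all real bidders pay 0. Then reporting 'never accept' is an ex-post optimal strategy for every shill bidder: for every realization of real bidders' values and every deviating acceptance strategy of the shills, the seller's revenue under the deviation is at most the revenue when all shills never accept. -/
/-- Revenue of a Dutch (descending) auction, modeled as a sequence of `L` stages: at
stage `s`, the designated bidder `β s` is offered price `π s`; the first acceptance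
ends the game, with the winner paying the price if she is a real bidder (a member
of `R`), and revenue `0` if the winner is a shill (winner-paying: shills generate no
revenue). If nobody accepts, revenue is `0`. -/
noncomputable def dutchRevenue {N : ℕ} (L : ℕ) (π : ℕ → ℝ) (β : ℕ → Fin N)
    (R : Finset (Fin N)) (acc : ℕ → Bool) : ℝ :=
  if h : ∃ s, s < L ∧ acc s = true then
    if β (Nat.find h) ∈ R then π (Nat.find h) else 0
  else 0

lemma dutchRevenue_nonneg {N : ℕ} (L : ℕ) (π : ℕ → ℝ) (hπ : ∀ s, 0 ≤ π s)
    (β : ℕ → Fin N) (R : Finset (Fin N)) (acc : ℕ → Bool) :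
    0 ≤ dutchRevenue L π β R acc := by
  unfold dutchRevenue
  split
  · split
    · exact hπ _
    · exact le_refl 0
  · exact le_refl 0

/-- The Dutch auction is strongly shill-proof: for every realization of
real bidders' acceptance behavior `accQ` (under which shill bidders never accept) and
every deviating acceptance strategy `acc'` of the shill bidders (which leaves real
bidders' behavior unchanged), the seller's revenue under the deviation is at most the
revenue when all shills never accept — i.e., never accepting is ex-post optimal for
shills. -/
theorem dutch_auction_strongly_shill_proof
    {N : ℕ} (L : ℕ) (π : ℕ → ℝ) (hπ : ∀ s, 0 ≤ π s)
    (β : ℕ → Fin N) (R : Finset (Fin N))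
    (accQ acc' : ℕ → Bool)
    (hreal : ∀ s, β s ∈ R → acc' s = accQ s)
    (hshill_never : ∀ s, β s ∉ R → accQ s = false) :
    dutchRevenue L π β R acc' ≤ dutchRevenue L π β R accQ := by
  have hnn := dutchRevenue_nonneg L π hπ β R accQ
  unfold dutchRevenue
  split
  case isTrue h =>
    set s₀ := Nat.find h with hs₀
    by_cases hmem : β s₀ ∈ R
    · -- accQ s₀ = true
      have hacc' : acc' s₀ = true := (Nat.find_spec h).2
      have haccQ : accQ s₀ = true := (hreal s₀ hmem) ▸ hacc'
      have h2 : ∃ s, s < L ∧ accQ s = true := ⟨s₀, (Nat.find_spec h).1, haccQ⟩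
      have hsame : Nat.find h2 = s₀ := by
        apply le_antisymm
        · exact Nat.find_le ⟨(Nat.find_spec h).1, haccQ⟩
        · by_contra hlt
          push_neg at hlt
          have hmin := Nat.find_min h hlt
          have hspec := Nat.find_spec h2
          by_cases hr : β (Nat.find h2) ∈ R
          · exact hmin ⟨hspec.1, (hreal _ hr).symm ▸ hspec.2⟩
          · exact absurd hspec.2 (by simp [hshill_never _ hr])
      rw [if_pos hmem]
      rw [dif_pos h2, hsame, if_pos hmem]
    · rw [if_neg hmem]; exact hnn
  case isFalse h => exact hnn
end

section
/- Let g : ℝⁿ → ℝ be non-decreasing in each coordinate and let F, F' be two probability mass functions on a finite product lattice Θⁿ such that F' is more affiliated than F in the Karlin–Rinott sense: log f'(x ∨ y) − log f'(x) ≥ log f(y) − log f(x ∧ y) for all x, y (with all four points in the support), and F, F' have equal marginals. Then E_{F'}[g(θ)] ≥ E_F[g(θ)]. -/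
/-- Karlin–Rinott: If `f'` is more affiliated than `f` on a finite
product lattice (multiplicatively: `f'(x ⊔ y) · f(x ⊓ y) ≥ f'(x) · f(y)` for all
`x, y`), both are probability mass functions with equal one-dimensional marginals,
and `g` is coordinatewise non-decreasing, then `E_{f'}[g] ≥ E_f[g]`. -/
theorem karlin_rinott_affiliation_order
    {Θ : Type*} [Fintype Θ] [LinearOrder Θ] (n : ℕ)
    (f f' : (Fin n → Θ) → ℝ)
    (hf0 : ∀ x, 0 ≤ f x) (hf'0 : ∀ x, 0 ≤ f' x)
    (hf1 : ∑ x, f x = 1) (hf'1 : ∑ x, f' x = 1)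
    (haff : ∀ x y, f' (x ⊔ y) * f (x ⊓ y) ≥ f' x * f y)
    (hmarg : ∀ (i : Fin n) (a : Θ),
      ∑ x ∈ Finset.univ.filter (fun x : Fin n → Θ => x i = a), f' x =
        ∑ x ∈ Finset.univ.filter (fun x : Fin n → Θ => x i = a), f x)
    (g : (Fin n → Θ) → ℝ) (hg : Monotone g) :
    ∑ x, f x * g x ≤ ∑ x, f' x * g x := by
  classical
  have hne : Nonempty (Fin n → Θ) := by
    by_contra h
    rw [not_nonempty_iff] at h
    simp [Finset.univ_eq_empty] at hf1
  obtain ⟨z⟩ := hne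
  set C : ℝ := Finset.univ.inf' ⟨z, Finset.mem_univ z⟩ g with hC
  have hCle : ∀ x, C ≤ g x := fun x => Finset.inf'_le _ (Finset.mem_univ x)
  have key := holley (μ := fun x => g x - C) (f := f) (g := f')
    (fun x => sub_nonneg.2 (hCle x)) hf0 hf'0
    (fun a b hab => sub_le_sub_right (hg hab) C)
    (hf1.trans hf'1.symm)
    (fun a b => by
      have := haff b a
      rw [sup_comm, inf_comm] at this
      linarith)
  have e1 : ∑ x, (g x - C) * f x = ∑ x, f x * g x - C := by
    rw [Finset.sum_congr rfl (fun x _ => by ring : ∀ x ∈ Finset.univ,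
      (g x - C) * f x = f x * g x - C * f x), Finset.sum_sub_distrib,
      ← Finset.mul_sum, hf1, mul_one]
  have e2 : ∑ x, (g x - C) * f' x = ∑ x, f' x * g x - C := by
    rw [Finset.sum_congr rfl (fun x _ => by ring : ∀ x ∈ Finset.univ,
      (g x - C) * f' x = f' x * g x - C * f' x), Finset.sum_sub_distrib,
      ← Finset.mul_sum, hf'1, mul_one]
  rw [e1, e2] at key
  linarith
end
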